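/- arXiv:math/0407465 — 2 statements merged into one kernel-verified Lean document; each statement's English description precedes it below -/
import Mathlib

section
/- Let d ≥ 1, let Ω ⊆ ℝ^d be an open set, and let 1 < p < ∞ with dual index p' = p/(p−1). Let Q : Ω → ℝ^d be a continuously differentiable vector field and let A : Ω → (ℝ^d → ℝ^d) be a continuously differentiable matrix-valued (tensor) field. Then for every smooth function ζ : ℝ^d → ℝ with compact support contained in Ω, ∫_Ω ‖A(x) ∇ζ(x)‖^p dx ≥ ∫_Ω ( div(Aᵀ Q)(x) − (p−1) ‖Q(x)‖^{p'} ) |ζ(x)|^p dx, where Aᵀ Q denotes the vector field x ↦ A(x)ᵀ Q(x) and div is the Euclidean divergence. -/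
open MeasureTheory Matrix
open scoped RealInnerProductSpace
open Set Function
open scoped Manifold

section aux
variable {d : ℕ} {Ω : Set (EuclideanSpace ℝ (Fin d))}

lemma glue_cont (hΩ : IsOpen Ω)
    {V : Type*} [NormedAddCommGroup V] [NormedSpace ℝ V]
    {χ : EuclideanSpace ℝ (Fin d) → ℝ} (hχ : Continuous χ) (hχΩ : tsupport χ ⊆ Ω)
    {f : EuclideanSpace ℝ (Fin d) → V} (hf : ContinuousOn f Ω) :
    Continuous fun x => χ x • f x := by
  refine continuous_iff_continuousAt.2 fun x => ?_
  by_cases hx : x ∈ Ω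
  · exact (hχ.continuousAt).smul (hf.continuousAt (hΩ.mem_nhds hx))
  · have hx' : x ∉ tsupport χ := fun h => hx (hχΩ h)
    have hev : (fun y => χ y • f y) =ᶠ[nhds x] fun _ => (0 : V) := by
      filter_upwards [(isClosed_tsupport χ).isOpen_compl.mem_nhds hx'] with y hy
      simp [image_eq_zero_of_notMem_tsupport hy]
    exact (continuousAt_congr hev).2 continuousAt_const

lemma cont_rpow {q : ℝ} (hq : 0 ≤ q) : Continuous fun t : ℝ => t ^ q :=
  continuous_iff_continuousAt.2 fun t => Real.continuousAt_rpow_const t q (Or.inr hq)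

lemma cutoff (hΩ : IsOpen Ω) {K' K'' : Set (EuclideanSpace ℝ (Fin d))}
    (hK'c : IsCompact K') (hK''c : IsCompact K'') (hK'K'' : K' ⊆ interior K'')
    (hK''Ω : K'' ⊆ Ω) :
    ∃ χ : EuclideanSpace ℝ (Fin d) → ℝ, ContDiff ℝ (⊤ : ℕ∞) χ ∧ HasCompactSupport χ ∧
      tsupport χ ⊆ Ω ∧ ∀ x ∈ K', χ x = 1 := by
  obtain ⟨χ₀, hχ₀, hχ₁, _⟩ :=
    exists_contMDiffMap_zero_one_of_isClosed (n := (⊤ : ℕ∞)) (𝓘(ℝ, EuclideanSpace ℝ (Fin d)))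
      (isOpen_interior (s := K'')).isClosed_compl hK'c.isClosed
      (Set.disjoint_left.2 fun x hx hx' => hx (hK'K'' hx'))
  refine ⟨χ₀, contMDiff_iff_contDiff.1 χ₀.contMDiff, ?_, ?_, fun x hx => hχ₁ hx⟩
  · exact HasCompactSupport.intro hK''c fun x hx =>
      hχ₀ (fun h => hx (interior_subset h))
  · refine (closure_minimal ?_ hK''c.isClosed).trans hK''Ω
    intro x hx
    by_contra hxK
    exact hx (hχ₀ fun h : x ∈ interior K'' => hxK (interior_subset h))

end aux

/-- Euclidean divergence of a vector field on `ℝ^d`. -/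
noncomputable def ediv {d : ℕ} (F : EuclideanSpace ℝ (Fin d) → EuclideanSpace ℝ (Fin d))
    (x : EuclideanSpace ℝ (Fin d)) : ℝ :=
  ∑ i : Fin d, ⟪fderiv ℝ F x (EuclideanSpace.single i 1), EuclideanSpace.single i 1⟫

set_option maxHeartbeats 2000000 in
theorem stmt_0 (d : ℕ) (hd : 1 ≤ d) (Ω : Set (EuclideanSpace ℝ (Fin d))) (hΩ : IsOpen Ω)
    (p p' : ℝ) (hp : 1 < p) (hp' : p' = p / (p - 1))
    (Q : EuclideanSpace ℝ (Fin d) → EuclideanSpace ℝ (Fin d))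
    (A : EuclideanSpace ℝ (Fin d) → Matrix (Fin d) (Fin d) ℝ)
    (hQ : ContDiffOn ℝ 1 Q Ω) (hA : ∀ i j, ContDiffOn ℝ 1 (fun x => A x i j) Ω)
    (ζ : EuclideanSpace ℝ (Fin d) → ℝ)
    (hζ : ContDiff ℝ (⊤ : ℕ∞) ζ) (hζc : HasCompactSupport ζ) (hζΩ : tsupport ζ ⊆ Ω) :
    ∫ x in Ω, ‖Matrix.toEuclideanLin (A x) (gradient ζ x)‖ ^ p
      ≥ ∫ x in Ω,
          (ediv (fun y => Matrix.toEuclideanLin (A y)ᵀ (Q y)) x - (p - 1) * ‖Q x‖ ^ p')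
            * |ζ x| ^ p := by
  classical
  have hp0 : (0:ℝ) < p := lt_trans one_pos hp
  have hp10 : p - 1 ≠ 0 := sub_ne_zero.2 hp.ne'
  have hpc : p.HolderConjugate p' := by rw [hp']; exact Real.HolderConjugate.conjExponent hp
  have hp'0 : (0:ℝ) < p' := hpc.symm.pos
  obtain ⟨K', hK'c, hKK', hK'Ω⟩ := exists_compact_between hζc hΩ hζΩ
  obtain ⟨K'', hK''c, hK'K'', hK''Ω⟩ := exists_compact_between hK'c hΩ hK'Ω
  obtain ⟨χ, hχsm, hχcs, hχΩ, hχ1⟩ := cutoff hΩ hK'c hK''c hK'K'' hK''Ω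
  have hKmem : tsupport ζ ⊆ K' := hKK'.trans interior_subset
  -- the vector fields
  set F : EuclideanSpace ℝ (Fin d) → EuclideanSpace ℝ (Fin d) :=
    fun y => Matrix.toEuclideanLin (A y)ᵀ (Q y) with hFdef
  set G : EuclideanSpace ℝ (Fin d) → EuclideanSpace ℝ (Fin d) := fun x => χ x • F x with hGdef
  have hGF : ∀ x ∈ K', G x = F x := fun x hx => by simp [hGdef, hχ1 x hx]
  have hF : ContDiffOn ℝ 1 F Ω := by
    have h1 : ∀ j, ContDiffOn ℝ 1 (fun y => Q y j) Ω := fun j =>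
      ContDiff.comp_contDiffOn
        (ContinuousLinearMap.contDiff (EuclideanSpace.proj (𝕜 := ℝ) j)) hQ
    rw [hFdef, contDiffOn_euclidean]
    intro i
    have h2 : (fun y => Matrix.toEuclideanLin (A y)ᵀ (Q y) i) =
        fun y => ∑ j, A y j i * Q y j := by
      funext y
      simp [Matrix.toEuclideanLin_apply, Matrix.mulVec, dotProduct,
        Matrix.transpose_apply]
    rw [h2]
    exact ContDiffOn.sum fun j _ => ((hA j i).mul (h1 j))
  have hG : ContDiff ℝ 1 G := by
    refine contDiff_iff_contDiffAt.2 fun x => ?_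
    by_cases hx : x ∈ Ω
    · exact ((hχsm.of_le (by exact_mod_cast le_top)).contDiffAt).smul (hF.contDiffAt (hΩ.mem_nhds hx))
    · have hx' : x ∉ tsupport χ := fun h => hx (hχΩ h)
      have hev : G =ᶠ[nhds x] fun _ => (0 : EuclideanSpace ℝ (Fin d)) := by
        filter_upwards [(isClosed_tsupport χ).isOpen_compl.mem_nhds hx'] with y hy
        simp [hGdef, image_eq_zero_of_notMem_tsupport hy]
      exact (contDiffAt_const (c := (0 : EuclideanSpace ℝ (Fin d)))).congr_of_eventuallyEq hev
  have hGcs : HasCompactSupport G := by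
    refine hχcs.mono fun x hx => ?_
    simp only [Function.mem_support] at hx ⊢
    intro h; exact hx (by simp [hGdef, h])
  -- the function u
  set u : EuclideanSpace ℝ (Fin d) → ℝ := fun x => ‖ζ x‖ ^ p with hudef
  have hu : ContDiff ℝ 1 u := (hζ.of_le (by simp)).norm_rpow hp
  have hu0 : ∀ x, x ∉ tsupport ζ → u x = 0 := fun x hx => by
    simp [hudef, image_eq_zero_of_notMem_tsupport hx, Real.zero_rpow hp0.ne']
  have husupp : Function.support u ⊆ Function.support ζ := fun x hx => by
    simp only [Function.mem_support] at hx ⊢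
    intro h; exact hx (by simp [hudef, h, Real.zero_rpow hp0.ne'])
  have hucs : HasCompactSupport u := hζc.mono husupp
  have huts : tsupport u ⊆ tsupport ζ := closure_mono husupp
  have hfu0 : ∀ x, x ∉ tsupport ζ → fderiv ℝ u x = 0 := by
    intro x hx
    by_contra h
    exact hx (huts (support_fderiv_subset ℝ (Function.mem_support.2 h)))
  -- continuity facts
  have hucont : Continuous u := hu.continuous
  have hGcont : Continuous G := hG.continuous
  have hfucont : Continuous (fun x => fderiv ℝ u x) := hu.continuous_fderiv one_ne_zero
  have hfGcont : Continuous (fun x => fderiv ℝ G x) := hG.continuous_fderiv one_ne_zero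
  have hedivG : Continuous (ediv G) := by
    have : ediv G = fun x => ∑ i : Fin d,
        ⟪fderiv ℝ G x (EuclideanSpace.single i 1), EuclideanSpace.single i 1⟫ := rfl
    rw [this]
    exact continuous_finset_sum _ fun i _ =>
      (hfGcont.clm_apply continuous_const).inner continuous_const
  -- main integrable functions
  have hint1 : Integrable (fun x => u x * ediv G x) := by
    exact (hucont.mul hedivG).integrable_of_hasCompactSupport hucs.mul_right
  have hint3 : Integrable (fun x => fderiv ℝ u x (G x)) := by
    refine (hfucont.clm_apply hGcont).integrable_of_hasCompactSupport (hζc.mono' ?_)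
    intro x hx
    simp only [Function.mem_support] at hx
    by_contra h
    exact hx (by rw [hfu0 x h]; simp)
  -- per-coordinate facts
  have hGi : ∀ i : Fin d, ContDiff ℝ 1 (fun y => G y i) := fun i =>
    ContDiff.comp (ContinuousLinearMap.contDiff (EuclideanSpace.proj (𝕜 := ℝ) i)) hG
  have hintA : ∀ i : Fin d, Integrable (fun x =>
      u x * fderiv ℝ (fun y => G y i) x (EuclideanSpace.single i 1)) := by
    intro i
    refine (hucont.mul (((hGi i).continuous_fderiv one_ne_zero).clm_apply
      continuous_const)).integrable_of_hasCompactSupport hucs.mul_right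
  have hintB : ∀ i : Fin d, Integrable (fun x =>
      fderiv ℝ u x (EuclideanSpace.single i 1) * G x i) := by
    intro i
    refine ((hfucont.clm_apply continuous_const).mul
      ((ContinuousLinearMap.continuous (EuclideanSpace.proj (𝕜 := ℝ) i)).comp
        hGcont)).integrable_of_hasCompactSupport (hζc.mono' ?_)
    intro x hx
    simp only [Function.mem_support] at hx
    by_contra h
    exact hx (by simp only [Pi.mul_apply, Function.comp_apply]; rw [hfu0 x h]; simp)
  have hkey : ∀ i : Fin d,
      ∫ x, u x * fderiv ℝ (fun y => G y i) x (EuclideanSpace.single i 1)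
        = - ∫ x, fderiv ℝ u x (EuclideanSpace.single i 1) * G x i := fun i =>
    integral_mul_fderiv_eq_neg_fderiv_mul_of_integrable (hintB i) (hintA i)
      ((hucont.mul ((ContinuousLinearMap.continuous (EuclideanSpace.proj (𝕜 := ℝ) i)).comp
        hGcont)).integrable_of_hasCompactSupport hucs.mul_right)
      (fun x _ => hu.differentiable one_ne_zero x) (fun x _ => (hGi i).differentiable one_ne_zero x)
  have hsum1 : ∀ x, u x * ediv G x
      = ∑ i, u x * fderiv ℝ (fun y => G y i) x (EuclideanSpace.single i 1) := by
    intro x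
    rw [ediv, Finset.mul_sum]
    refine Finset.sum_congr rfl fun i _ => ?_
    have hd : HasFDerivAt (fun y => G y i)
        ((EuclideanSpace.proj (𝕜 := ℝ) i).comp (fderiv ℝ G x)) x :=
      (EuclideanSpace.proj (𝕜 := ℝ) i).hasFDerivAt.comp x (hG.differentiable one_ne_zero x).hasFDerivAt
    rw [hd.fderiv]
    congr 1
    simp [EuclideanSpace.inner_single_right]
  have hsum2 : ∀ x, fderiv ℝ u x (G x)
      = ∑ i, fderiv ℝ u x (EuclideanSpace.single i 1) * G x i := by
    intro x
    have hrepr : G x = ∑ i, G x i • EuclideanSpace.single i (1:ℝ) := by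
      have := (EuclideanSpace.basisFun (Fin d) ℝ).sum_repr (G x)
      simp only [EuclideanSpace.basisFun_apply, EuclideanSpace.basisFun_repr] at this
      exact this.symm
    conv_lhs => rw [hrepr]
    rw [map_sum]
    exact Finset.sum_congr rfl fun i _ => by rw [(fderiv ℝ u x).map_smul, smul_eq_mul, mul_comm]
  have hIBP : ∫ x, u x * ediv G x = - ∫ x, fderiv ℝ u x (G x) := by
    calc ∫ x, u x * ediv G x
        = ∫ x, ∑ i, u x * fderiv ℝ (fun y => G y i) x (EuclideanSpace.single i 1) := by
          congr 1; funext x; exact hsum1 x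
      _ = ∑ i, ∫ x, u x * fderiv ℝ (fun y => G y i) x (EuclideanSpace.single i 1) :=
          integral_finset_sum _ fun i _ => hintA i
      _ = ∑ i, - ∫ x, fderiv ℝ u x (EuclideanSpace.single i 1) * G x i :=
          Finset.sum_congr rfl fun i _ => hkey i
      _ = - ∑ i, ∫ x, fderiv ℝ u x (EuclideanSpace.single i 1) * G x i := by
          rw [← Finset.sum_neg_distrib]
      _ = - ∫ x, ∑ i, fderiv ℝ u x (EuclideanSpace.single i 1) * G x i := by
          rw [integral_finset_sum _ fun i _ => hintB i]
      _ = - ∫ x, fderiv ℝ u x (G x) := by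
          rw [show (fun x => (fderiv ℝ u x) (G x))
            = fun x => ∑ i, (fderiv ℝ u x) (EuclideanSpace.single i 1) * G x i
            from funext hsum2]
  -- continuity of auxiliary compositions
  have hgradcont : Continuous (gradient ζ) := by
    have hgr : gradient ζ = fun x => (InnerProductSpace.toDual ℝ (EuclideanSpace ℝ (Fin d))).symm (fderiv ℝ ζ x) := rfl
    rw [hgr]
    exact (InnerProductSpace.toDual ℝ (EuclideanSpace ℝ (Fin d))).symm.continuous.comp (hζ.continuous_fderiv (by simp))
  have hgrad0 : ∀ x, x ∉ tsupport ζ → gradient ζ x = 0 := by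
    intro x hx
    have h0 : fderiv ℝ ζ x = 0 := by
      by_contra hne
      exact hx (support_fderiv_subset ℝ (Function.mem_support.2 hne))
    show (InnerProductSpace.toDual ℝ (EuclideanSpace ℝ (Fin d))).symm (fderiv ℝ ζ x) = 0
    rw [h0, map_zero]
  have hHcont : ContinuousOn (fun x => Matrix.toEuclideanLin (A x) (gradient ζ x)) Ω := by
    have hcd : ContDiffOn ℝ 0 (fun x => Matrix.toEuclideanLin (A x) (gradient ζ x)) Ω := by
      rw [contDiffOn_euclidean]
      intro i
      have h2 : (fun y => Matrix.toEuclideanLin (A y) (gradient ζ y) i)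
          = fun y => ∑ j, A y i j * gradient ζ y j := by
        funext y
        simp [Matrix.toEuclideanLin_apply, Matrix.mulVec, dotProduct]
      rw [h2]
      refine ContDiffOn.sum fun j _ => ?_
      rw [contDiffOn_zero]
      exact ((hA i j).continuousOn.mul
        (((ContinuousLinearMap.continuous (EuclideanSpace.proj (𝕜 := ℝ) j)).comp
          hgradcont).continuousOn))
    exact hcd.continuousOn
  have hχQ : Continuous fun x => χ x • Q x :=
    glue_cont hΩ hχsm.continuous hχΩ hQ.continuousOn
  have hχH : Continuous fun x => χ x • Matrix.toEuclideanLin (A x) (gradient ζ x) :=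
    glue_cont hΩ hχsm.continuous hχΩ hHcont
  have hint2 : Integrable (fun x => (p - 1) * ‖χ x • Q x‖ ^ p' * u x) :=
    ((continuous_const.mul ((cont_rpow hp'0.le).comp
      hχQ.norm)).mul hucont).integrable_of_hasCompactSupport hucs.mul_left
  have hint4 : Integrable
      (fun x => ‖χ x • Matrix.toEuclideanLin (A x) (gradient ζ x)‖ ^ p) := by
    refine ((cont_rpow hp0.le).comp hχH.norm).integrable_of_hasCompactSupport (hχcs.mono ?_)
    intro x hx
    simp only [Function.mem_support] at hx ⊢
    intro h
    exact hx (by simp [h, Real.zero_rpow hp0.ne'])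
  -- the formula for the derivative of u
  have hfuF : ∀ x, fderiv ℝ u x
      = (p * ‖ζ x‖ ^ (p - 2)) • (innerSL ℝ (ζ x)).comp (fderiv ℝ ζ x) := by
    intro x
    rw [hudef]
    exact Differentiable.fderiv_norm_rpow (hζ.differentiable (by simp)) hp
  -- pointwise inequality
  have hpt : ∀ x ∈ Ω, - fderiv ℝ u x (G x) - (p - 1) * ‖χ x • Q x‖ ^ p' * u x
      ≤ ‖χ x • Matrix.toEuclideanLin (A x) (gradient ζ x)‖ ^ p := by
    intro x hx
    by_cases hxK : x ∈ tsupport ζ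
    · have hχx : χ x = 1 := hχ1 x (hKmem hxK)
      have hGFx : G x = F x := hGF x (hKmem hxK)
      have ht0 : (0:ℝ) ≤ ‖ζ x‖ := norm_nonneg _
      have ha0 : (0:ℝ) ≤ ‖Matrix.toEuclideanLin (A x) (gradient ζ x)‖ := norm_nonneg _
      have hq0 : (0:ℝ) ≤ ‖Q x‖ := norm_nonneg _
      have h1 : fderiv ℝ u x (G x)
          = (p * ‖ζ x‖ ^ (p - 2)) * (ζ x * fderiv ℝ ζ x (F x)) := by
        rw [hGFx, hfuF x]
        simp [RCLike.inner_apply, mul_assoc, mul_comm]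
      have h2 : fderiv ℝ ζ x (F x)
          = ⟪Matrix.toEuclideanLin (A x) (gradient ζ x), Q x⟫ := by
        have e1 : fderiv ℝ ζ x (F x) = ⟪gradient ζ x, F x⟫ :=
          (InnerProductSpace.toDual_symm_apply).symm
        rw [e1, show F x = Matrix.toEuclideanLin (A x)ᵀ (Q x) from rfl]
        rw [← Matrix.conjTranspose_eq_transpose_of_trivial,
          Matrix.toEuclideanLin_conjTranspose_eq_adjoint, LinearMap.adjoint_inner_right]
      have hstept : ‖ζ x‖ ^ (p - 2) * ‖ζ x‖ = ‖ζ x‖ ^ (p - 1) := by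
        have h3 := Real.rpow_add_one' (y := p - 2) ht0 (by intro h; exact hp10 (by linarith))
        rw [show p - 2 + 1 = p - 1 by ring] at h3
        rw [← h3]
      have habs : |fderiv ℝ u x (G x)|
          ≤ p * ‖ζ x‖ ^ (p - 1) * (‖Matrix.toEuclideanLin (A x) (gradient ζ x)‖ * ‖Q x‖) := by
        rw [h1, h2]
        have hc0 : (0:ℝ) ≤ p * ‖ζ x‖ ^ (p - 2) := by positivity
        rw [abs_mul, abs_of_nonneg hc0, abs_mul]
        have hCS := abs_real_inner_le_norm (Matrix.toEuclideanLin (A x) (gradient ζ x)) (Q x)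
        have hzabs : |ζ x| = ‖ζ x‖ := (Real.norm_eq_abs _).symm
        calc p * ‖ζ x‖ ^ (p - 2) * (|ζ x| * |⟪Matrix.toEuclideanLin (A x) (gradient ζ x), Q x⟫|)
            ≤ p * ‖ζ x‖ ^ (p - 2) * (‖ζ x‖ *
              (‖Matrix.toEuclideanLin (A x) (gradient ζ x)‖ * ‖Q x‖)) := by
              rw [hzabs]
              have h4 : (0:ℝ) ≤ p * ‖ζ x‖ ^ (p - 2) * ‖ζ x‖ := by positivity
              refine mul_le_mul_of_nonneg_left ?_ hc0
              exact mul_le_mul_of_nonneg_left hCS ht0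
          _ = p * ‖ζ x‖ ^ (p - 1) * (‖Matrix.toEuclideanLin (A x) (gradient ζ x)‖ * ‖Q x‖) := by
              rw [← hstept]; ring
      have hY := Real.young_inequality_of_nonneg
        (a := ‖Matrix.toEuclideanLin (A x) (gradient ζ x)‖)
        (b := ‖ζ x‖ ^ (p - 1) * ‖Q x‖) ha0
        (mul_nonneg (Real.rpow_nonneg ht0 _) hq0) hpc
      have hbp : (‖ζ x‖ ^ (p - 1) * ‖Q x‖) ^ p' = ‖ζ x‖ ^ p * ‖Q x‖ ^ p' := by
        rw [Real.mul_rpow (Real.rpow_nonneg ht0 _) hq0, ← Real.rpow_mul ht0]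
        congr 2
        rw [hp']
        field_simp
      have hpp' : p / p' = p - 1 := by
        rw [hp']
        field_simp
      have hYp : p * (‖Matrix.toEuclideanLin (A x) (gradient ζ x)‖ *
          (‖ζ x‖ ^ (p - 1) * ‖Q x‖))
          ≤ ‖Matrix.toEuclideanLin (A x) (gradient ζ x)‖ ^ p
            + (p - 1) * (‖ζ x‖ ^ p * ‖Q x‖ ^ p') := by
        have h5 := mul_le_mul_of_nonneg_left hY hp0.le
        rw [mul_add, hbp] at h5
        have e1 : p * (‖Matrix.toEuclideanLin (A x) (gradient ζ x)‖ ^ p / p)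
            = ‖Matrix.toEuclideanLin (A x) (gradient ζ x)‖ ^ p := by
          field_simp
        have e2 : p * (‖ζ x‖ ^ p * ‖Q x‖ ^ p' / p')
            = (p - 1) * (‖ζ x‖ ^ p * ‖Q x‖ ^ p') := by
          rw [← hpp']
          field_simp
        rw [e1, e2] at h5
        exact h5
      have hux : u x = ‖ζ x‖ ^ p := by rw [hudef]
      rw [hχx, one_smul, one_smul, hux]
      have hneg : - fderiv ℝ u x (G x)
          ≤ ‖Matrix.toEuclideanLin (A x) (gradient ζ x)‖ ^ p
            + (p - 1) * (‖ζ x‖ ^ p * ‖Q x‖ ^ p') := by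
        refine (neg_le_abs _).trans (habs.trans ?_)
        refine le_trans (le_of_eq (by ring)) hYp
      linarith [hneg,
        (by ring : (p - 1) * (‖ζ x‖ ^ p * ‖Q x‖ ^ p')
          = (p - 1) * ‖Q x‖ ^ p' * ‖ζ x‖ ^ p)]
    · have hz : ζ x = 0 := image_eq_zero_of_notMem_tsupport hxK
      have hux : u x = 0 := hu0 x hxK
      have hfux : fderiv ℝ u x = 0 := hfu0 x hxK
      rw [hux, hfux]
      simp only [ContinuousLinearMap.zero_apply, neg_zero, mul_zero, sub_zero]
      exact Real.rpow_nonneg (norm_nonneg _) p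
  -- assembling
  rw [ge_iff_le]
  have hstep1 : ∫ x in Ω, (ediv F x - (p - 1) * ‖Q x‖ ^ p') * |ζ x| ^ p
      = ∫ x in Ω, (u x * ediv G x - (p - 1) * ‖χ x • Q x‖ ^ p' * u x) := by
    refine setIntegral_congr_fun hΩ.measurableSet fun x hx => ?_
    by_cases hxK : x ∈ tsupport ζ
    · have hχx : χ x = 1 := hχ1 x (hKmem hxK)
      have hediv : ediv F x = ediv G x := by
        have hev : F =ᶠ[nhds x] G := by
          filter_upwards [isOpen_interior.mem_nhds (hKK' hxK)] with y hy
          exact (hGF y (interior_subset hy)).symm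
        simp only [ediv, hev.fderiv_eq]
      have hux : |ζ x| ^ p = u x := by rw [hudef]; simp [Real.norm_eq_abs]
      rw [hediv, hχx, one_smul, hux]
      ring
    · have hux : u x = 0 := hu0 x hxK
      have hz : ζ x = 0 := image_eq_zero_of_notMem_tsupport hxK
      rw [hux, hz]
      simp [Real.zero_rpow hp0.ne']
  have hΩ1 : ∫ x in Ω, u x * ediv G x = ∫ x, u x * ediv G x :=
    setIntegral_eq_integral_of_forall_compl_eq_zero fun x hx => by
      rw [hu0 x fun h => hx (hζΩ h), zero_mul]
  have hΩ2 : ∫ x in Ω, fderiv ℝ u x (G x) = ∫ x, fderiv ℝ u x (G x) :=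
    setIntegral_eq_integral_of_forall_compl_eq_zero fun x hx => by
      rw [hfu0 x fun h => hx (hζΩ h)]; simp
  have hsub : ∫ x in Ω, (u x * ediv G x - (p - 1) * ‖χ x • Q x‖ ^ p' * u x)
      = (∫ x in Ω, u x * ediv G x) - ∫ x in Ω, (p - 1) * ‖χ x • Q x‖ ^ p' * u x :=
    integral_sub hint1.integrableOn hint2.integrableOn
  have hmerge : (∫ x in Ω, u x * ediv G x)
        - ∫ x in Ω, (p - 1) * ‖χ x • Q x‖ ^ p' * u x
      = ∫ x in Ω, (- fderiv ℝ u x (G x) - (p - 1) * ‖χ x • Q x‖ ^ p' * u x) := by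
    have h7 : ∫ x in Ω, u x * ediv G x = - ∫ x in Ω, fderiv ℝ u x (G x) := by
      rw [hΩ1, hΩ2, hIBP]
    calc (∫ x in Ω, u x * ediv G x) - ∫ x in Ω, (p - 1) * ‖χ x • Q x‖ ^ p' * u x
        = (- ∫ x in Ω, fderiv ℝ u x (G x))
            - ∫ x in Ω, (p - 1) * ‖χ x • Q x‖ ^ p' * u x := by rw [h7]
      _ = (∫ x in Ω, - fderiv ℝ u x (G x))
            - ∫ x in Ω, (p - 1) * ‖χ x • Q x‖ ^ p' * u x := by rw [integral_neg]
      _ = ∫ x in Ω, (- fderiv ℝ u x (G x) - (p - 1) * ‖χ x • Q x‖ ^ p' * u x) :=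
          (integral_sub hint3.integrableOn.neg hint2.integrableOn).symm
  have hmono : ∫ x in Ω, (- fderiv ℝ u x (G x) - (p - 1) * ‖χ x • Q x‖ ^ p' * u x)
      ≤ ∫ x in Ω, ‖χ x • Matrix.toEuclideanLin (A x) (gradient ζ x)‖ ^ p :=
    setIntegral_mono_on (hint3.neg.sub hint2).integrableOn hint4.integrableOn
      hΩ.measurableSet hpt
  have hlast : ∫ x in Ω, ‖χ x • Matrix.toEuclideanLin (A x) (gradient ζ x)‖ ^ p
      = ∫ x in Ω, ‖Matrix.toEuclideanLin (A x) (gradient ζ x)‖ ^ p := by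
    refine setIntegral_congr_fun hΩ.measurableSet fun x hx => ?_
    by_cases hxK : x ∈ tsupport ζ
    · rw [hχ1 x (hKmem hxK), one_smul]
    · rw [hgrad0 x hxK]
      simp
  exact le_trans (le_of_eq (hstep1.trans (hsub.trans hmerge)))
    (hmono.trans (le_of_eq hlast))
end

section
/- Let d ≥ 1, L > 0, fix a coordinate index i ∈ {1,…,d}, and let S := {x ∈ ℝ^d : 0 < xᵢ < L}. Let ζ : ℝ^d → ℝ be a smooth compactly supported function with ζ(x) = 0 whenever xᵢ ≥ L (Dirichlet condition at the face {xᵢ = L}; no condition at {xᵢ = 0}). Then ∫_S ‖∇ζ(x)‖² dx ≥ (π²/(4L²)) ∫_S ζ(x)² dx. -/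
open MeasureTheory
open scoped Real

lemma oneD {L c : ℝ} (hL : 0 < L) (hc : 0 < c) (hcL : c * L < π / 2)
    (f : ℝ → ℝ) (hf : ContDiff ℝ 1 f) (hfL : f L = 0) :
    0 ≤ ∫ t in Set.Ioo (0:ℝ) L, (deriv f t ^ 2 - c ^ 2 * f t ^ 2) := by
  have hfd : Differentiable ℝ f := hf.differentiable one_ne_zero
  have hfc : Continuous (deriv f) := hf.continuous_deriv le_rfl
  have hcos : ∀ t ∈ Set.uIcc (0:ℝ) L, Real.cos (c * t) ≠ 0 := by
    intro t ht
    rw [Set.uIcc_of_le hL.le] at ht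
    have h2 : c * t < π / 2 := lt_of_le_of_lt (by nlinarith [ht.2]) hcL
    exact (Real.cos_pos_of_mem_Ioo ⟨by nlinarith [Real.pi_div_two_pos, ht.1], h2⟩).ne'
  set m : ℝ → ℝ := fun t => Real.tan (c * t) with hm
  have hmc : ContinuousOn m (Set.uIcc (0:ℝ) L) := by
    intro t ht
    exact ((Real.continuousAt_tan.mpr (hcos t ht)).comp
      (continuous_const.mul continuous_id).continuousAt).continuousWithinAt
  have hmderiv : ∀ t ∈ Set.uIcc (0:ℝ) L,
      HasDerivAt m (c * (1 / Real.cos (c * t) ^ 2)) t := by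
    intro t ht
    have := (Real.hasDerivAt_tan (hcos t ht)).comp t
      ((hasDerivAt_id t).const_mul c)
    rw [hm]; simpa [mul_comm, Function.comp_def] using this
  -- derivative of F t = c * f t ^ 2 * m t
  set F' : ℝ → ℝ := fun t =>
    c * (2 * f t * deriv f t) * m t + c * f t ^ 2 * (c * (1 / Real.cos (c * t) ^ 2)) with hF'
  have hFd : ∀ t ∈ Set.uIcc (0:ℝ) L,
      HasDerivAt (fun t => c * f t ^ 2 * m t) (F' t) t := by
    intro t ht
    have hft : HasDerivAt f (deriv f t) t := (hfd t).hasDerivAt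
    have h1 : HasDerivAt (fun t => c * f t ^ 2) (c * (2 * f t * deriv f t)) t := by
      simpa [mul_comm, mul_assoc, mul_left_comm] using ((hft.pow 2).const_mul c)
    exact h1.mul (hmderiv t ht)
  have hF'c : ContinuousOn F' (Set.uIcc (0:ℝ) L) := by
    apply ContinuousOn.add
    · exact (((continuous_const.mul ((continuous_const.mul hfd.continuous).mul
        hfc)).continuousOn).mul hmc)
    · apply ContinuousOn.mul (continuous_const.mul (hfd.continuous.pow 2)).continuousOn
      apply ContinuousOn.mul continuousOn_const
      apply ContinuousOn.div continuousOn_const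
      · exact ((Real.continuous_cos.comp (continuous_const.mul continuous_id)).pow 2).continuousOn
      · intro t ht; exact pow_ne_zero 2 (hcos t ht)
  have hFint : ∫ t in (0:ℝ)..L, F' t = 0 := by
    rw [intervalIntegral.integral_eq_sub_of_hasDerivAt hFd
      (hF'c.intervalIntegrable)]
    simp [hfL, hm, Real.tan_zero]
  have key : ∀ t ∈ Set.uIcc (0:ℝ) L,
      deriv f t ^ 2 - c ^ 2 * f t ^ 2 = (deriv f t + c * f t * m t) ^ 2 - F' t := by
    intro t ht
    have h1 : (1 : ℝ) / Real.cos (c * t) ^ 2 = 1 + m t ^ 2 := by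
      rw [hm, one_div, ← Real.inv_one_add_tan_sq (hcos t ht), inv_inv]
    simp only [hF']; rw [h1]; ring
  have hgint : IntervalIntegrable (fun t => (deriv f t + c * f t * m t) ^ 2) volume 0 L := by
    apply ContinuousOn.intervalIntegrable
    exact ((hfc.continuousOn.add ((continuous_const.mul hfd.continuous).continuousOn.mul hmc)).pow 2)
  have hF'int : IntervalIntegrable F' volume 0 L := hF'c.intervalIntegrable
  have h0 : 0 ≤ ∫ t in (0:ℝ)..L, (deriv f t ^ 2 - c ^ 2 * f t ^ 2) := by
    rw [intervalIntegral.integral_congr key, intervalIntegral.integral_sub hgint hF'int, hFint,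
      sub_zero]
    exact intervalIntegral.integral_nonneg hL.le (fun t _ => sq_nonneg _)
  rwa [intervalIntegral.integral_of_le hL.le, MeasureTheory.integral_Ioc_eq_integral_Ioo] at h0

theorem stmt_6 (d : ℕ) (hd : 1 ≤ d) (L : ℝ) (hL : 0 < L) (i : Fin d)
    (S : Set (EuclideanSpace ℝ (Fin d)))
    (hS : S = {x : EuclideanSpace ℝ (Fin d) | 0 < x i ∧ x i < L})
    (ζ : EuclideanSpace ℝ (Fin d) → ℝ)
    (hζ : ContDiff ℝ (⊤ : ℕ∞) ζ) (hζc : HasCompactSupport ζ)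
    (hDir : ∀ x : EuclideanSpace ℝ (Fin d), L ≤ x i → ζ x = 0) :
    ∫ x in S, ‖gradient ζ x‖ ^ 2 ≥ (π ^ 2 / (4 * L ^ 2)) * ∫ x in S, ζ x ^ 2 := by
  obtain ⟨n, rfl⟩ : ∃ n, d = n + 1 := ⟨d - 1, (Nat.succ_pred_eq_of_pos hd).symm⟩
  set v : EuclideanSpace ℝ (Fin (n + 1)) := EuclideanSpace.single i (1 : ℝ) with hv
  have hζd : Differentiable ℝ ζ := hζ.differentiable (by simp)
  have hfdc : Continuous (fun x => fderiv ℝ ζ x) := hζ.continuous_fderiv (by simp)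
  have hfdvc : Continuous (fun x => fderiv ℝ ζ x v) := by
    exact (ContinuousLinearMap.apply ℝ ℝ v).continuous.comp hfdc
  -- measurability of S
  have hSm : MeasurableSet S := by
    rw [hS]
    have : Continuous (fun x : EuclideanSpace ℝ (Fin (n+1)) => x i) :=
      (EuclideanSpace.proj i).continuous
    exact (measurableSet_lt measurable_const this.measurable).inter
      (measurableSet_lt this.measurable measurable_const)
  -- gradient vs fderiv
  have hgradeq : ∀ x : EuclideanSpace ℝ (Fin (n+1)),
      fderiv ℝ ζ x = (InnerProductSpace.toDual ℝ _) (gradient ζ x) := by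
    intro x
    exact (hasGradientAt_iff_hasFDerivAt.mp (hζd x).hasGradientAt).fderiv
  have hgradc : Continuous (fun x : EuclideanSpace ℝ (Fin (n+1)) => gradient ζ x) := by
    have : (fun x : EuclideanSpace ℝ (Fin (n+1)) => gradient ζ x)
        = fun x => (InnerProductSpace.toDual ℝ _).symm (fderiv ℝ ζ x) := by
      funext x; rw [hgradeq x]; exact ((InnerProductSpace.toDual ℝ _).symm_apply_apply _).symm
    rw [this]
    exact (InnerProductSpace.toDual ℝ _).symm.continuous.comp hfdc
  have hptwise : ∀ x : EuclideanSpace ℝ (Fin (n+1)),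
      (fderiv ℝ ζ x v) ^ 2 ≤ ‖gradient ζ x‖ ^ 2 := by
    intro x
    have h1 : fderiv ℝ ζ x v = inner ℝ (gradient ζ x) v := by
      rw [hgradeq x]; simp [InnerProductSpace.toDual_apply_apply]
    have h2 : |fderiv ℝ ζ x v| ≤ ‖gradient ζ x‖ := by
      rw [h1]
      calc |inner ℝ (gradient ζ x) v| ≤ ‖gradient ζ x‖ * ‖v‖ := abs_real_inner_le_norm _ _
        _ = ‖gradient ζ x‖ := by rw [hv, EuclideanSpace.norm_single]; simp
    calc (fderiv ℝ ζ x v) ^ 2 = |fderiv ℝ ζ x v| ^ 2 := (sq_abs _).symm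
      _ ≤ ‖gradient ζ x‖ ^ 2 := by
        apply pow_le_pow_left₀ (abs_nonneg _) h2
  -- compact supports
  have hfdsupp : HasCompactSupport (fun x => fderiv ℝ ζ x v) :=
    (hζc.fderiv ℝ).comp_left (g := fun l : EuclideanSpace ℝ (Fin (n+1)) →L[ℝ] ℝ => l v) rfl
  have hgradsupp : HasCompactSupport (fun x : EuclideanSpace ℝ (Fin (n+1)) => gradient ζ x) := by
    have := (hζc.fderiv ℝ).comp_left
      (g := fun l : EuclideanSpace ℝ (Fin (n+1)) →L[ℝ] ℝ => (InnerProductSpace.toDual ℝ _).symm l)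
      (by simp)
    apply this.mono'
    intro x hx
    apply subset_closure
    simp only [Function.mem_support, Function.comp_apply] at hx ⊢
    have hgx : gradient ζ x = (InnerProductSpace.toDual ℝ _).symm (fderiv ℝ ζ x) := by
      rw [hgradeq x]; exact ((InnerProductSpace.toDual ℝ _).symm_apply_apply _).symm
    rwa [← hgx]
  have hint1 : IntegrableOn (fun x : EuclideanSpace ℝ (Fin (n+1)) => ‖gradient ζ x‖ ^ 2) S :=
    (Continuous.integrable_of_hasCompactSupport (f := fun x : EuclideanSpace ℝ (Fin (n+1)) => ‖gradient ζ x‖ ^ 2) (by fun_prop)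
      (hgradsupp.comp_left (g := fun y : EuclideanSpace ℝ (Fin (n+1)) => ‖y‖ ^ 2)
        (by simp))).integrableOn
  have hint2 : IntegrableOn (fun x : EuclideanSpace ℝ (Fin (n+1)) => (fderiv ℝ ζ x v) ^ 2) S :=
    (Continuous.integrable_of_hasCompactSupport (f := fun x : EuclideanSpace ℝ (Fin (n+1)) => (fderiv ℝ ζ x v) ^ 2) (by fun_prop)
      (hfdsupp.comp_left (g := fun y : ℝ => y ^ 2) (by simp))).integrableOn
  have hint3 : IntegrableOn (fun x : EuclideanSpace ℝ (Fin (n+1)) => ζ x ^ 2) S :=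
    (Continuous.integrable_of_hasCompactSupport (f := fun x : EuclideanSpace ℝ (Fin (n+1)) => ζ x ^ 2) (by have := hζ.continuous; fun_prop)
      (hζc.comp_left (g := fun y : ℝ => y ^ 2) (by simp))).integrableOn
  -- step 1 : monotonicity
  have step1 : ∫ x in S, (fderiv ℝ ζ x v) ^ 2 ≤ ∫ x in S, ‖gradient ζ x‖ ^ 2 :=
    setIntegral_mono_on hint2 hint1 hSm (fun x _ => hptwise x)
  -- main estimate for each c
  have main : ∀ c : ℝ, 0 < c → c * L < π / 2 →
      c ^ 2 * ∫ x in S, ζ x ^ 2 ≤ ∫ x in S, (fderiv ℝ ζ x v) ^ 2 := by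
    intro c hc hcL
    set G : EuclideanSpace ℝ (Fin (n+1)) → ℝ :=
      fun x => (fderiv ℝ ζ x v) ^ 2 - c ^ 2 * ζ x ^ 2 with hG
    have hGcont : Continuous G :=
      (hfdvc.pow 2).sub (continuous_const.mul (hζ.continuous.pow 2))
    have hGsupp : HasCompactSupport G := by
      apply HasCompactSupport.intro hζc
      intro x hx
      have h1 : ζ x = 0 := image_eq_zero_of_notMem_tsupport hx
      have h2 : fderiv ℝ ζ x = 0 := by
        by_contra h
        exact hx (support_fderiv_subset ℝ (Function.mem_support.mpr h))
      rw [hG]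
      simp [h1, h2]
    have hGint : Integrable G := hGcont.integrable_of_hasCompactSupport hGsupp
    set ψ : (ℝ × (Fin n → ℝ)) ≃ᵐ EuclideanSpace ℝ (Fin (n+1)) :=
      ((MeasurableEquiv.piFinSuccAbove (fun _ => ℝ) i).symm).trans
        ((MeasurableEquiv.toLp 2 (Fin (n+1) → ℝ)).symm).symm with hψ
    have happly : ∀ (t : ℝ) (p : Fin n → ℝ) (j : Fin (n+1)),
        (ψ (t, p)) j = (i.insertNth t p : Fin (n+1) → ℝ) j := fun t p j => rfl
    have hψmp : MeasurePreserving ψ volume volume :=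
      ((EuclideanSpace.volume_preserving_symm_measurableEquiv_toLp (Fin (n+1))).symm).comp
        ((volume_preserving_piFinSuccAbove (fun _ => ℝ) i).symm)
    have hψemb : MeasurableEmbedding ψ := ψ.measurableEmbedding
    have hpre : ⇑ψ ⁻¹' S = Set.Ioo (0:ℝ) L ×ˢ Set.univ := by
      ext ⟨t, p⟩
      simp [hS, happly, Fin.insertNth_apply_same, Set.mem_Ioo, and_comm]
    have hpath : ∀ (t : ℝ) (p : Fin n → ℝ), ψ (t, p) = ψ (0, p) + t • v := by
      intro t p
      ext j
      have h1 := happly t p j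
      have h2 := happly 0 p j
      rw [PiLp.add_apply, PiLp.smul_apply, h1, h2, hv, EuclideanSpace.single_apply]
      rcases eq_or_ne j i with rfl | hj
      · simp [Fin.insertNth_apply_same]
      · obtain ⟨k, rfl⟩ := Fin.exists_succAbove_eq hj
        simp [Fin.insertNth_apply_succAbove, (Fin.succAbove_ne i k)]
    have hGnonneg : 0 ≤ ∫ x in S, G x := by
      have e1 : ∫ x in S, G x = ∫ z in ⇑ψ ⁻¹' S, G (ψ z) :=
        (hψmp.setIntegral_preimage_emb hψemb G S).symm
      rw [e1, hpre, ← integral_indicator (measurableSet_Ioo.prod MeasurableSet.univ)]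
      have hGψint : Integrable
          ((Set.Ioo (0:ℝ) L ×ˢ (Set.univ : Set (Fin n → ℝ))).indicator (fun z => G (ψ z)))
          (volume.prod volume) := by
        exact ((hψmp.integrable_comp_emb hψemb).mpr hGint).indicator
          (measurableSet_Ioo.prod MeasurableSet.univ)
      rw [show (volume : Measure (ℝ × (Fin n → ℝ))) = (volume : Measure ℝ).prod volume from rfl,
        integral_prod_symm _ hGψint]
      apply integral_nonneg
      intro p
      have hind : ∀ t : ℝ, (Set.Ioo (0:ℝ) L ×ˢ (Set.univ : Set (Fin n → ℝ))).indicator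
          (fun z => G (ψ z)) (t, p)
          = (Set.Ioo (0:ℝ) L).indicator (fun t => G (ψ (t, p))) t := by
        intro t
        by_cases ht : t ∈ Set.Ioo (0:ℝ) L <;> simp [Set.indicator_apply, ht]
      simp only [hind]
      rw [integral_indicator measurableSet_Ioo]
      -- one-dimensional slice
      set z0 := ψ (0, p) with hz0
      set f : ℝ → ℝ := fun t => ζ (z0 + t • v) with hf
      have hfc1 : ContDiff ℝ 1 f :=
        (hζ.of_le (by simp)).comp (contDiff_const.add (contDiff_id.smul contDiff_const))
      have hfL : f L = 0 := by
        apply hDir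
        have : (z0 + L • v) i = L := by
          rw [PiLp.add_apply, PiLp.smul_apply]
          have : z0 i = 0 := by rw [hz0, happly 0 p i, Fin.insertNth_apply_same]
          rw [this, hv, EuclideanSpace.single_apply]
          simp
        rw [this]
      have hderiv : ∀ t : ℝ, HasDerivAt f (fderiv ℝ ζ (z0 + t • v) v) t := by
        intro t
        have h1 : HasDerivAt (fun s : ℝ => z0 + s • v) v t := by
          simpa using ((hasDerivAt_id t).smul_const v).const_add z0
        exact (hζd (z0 + t • v)).hasFDerivAt.comp_hasDerivAt t h1
      have hGeq : ∀ t : ℝ, G (ψ (t, p)) = deriv f t ^ 2 - c ^ 2 * f t ^ 2 := by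
        intro t
        rw [hpath t p, ← hz0, hG]
        have : deriv f t = fderiv ℝ ζ (z0 + t • v) v := (hderiv t).deriv
        rw [this]
      simp only [hGeq]
      exact oneD hL hc hcL f hfc1 hfL
    have hsplit : ∫ x in S, G x
        = (∫ x in S, (fderiv ℝ ζ x v) ^ 2) - c ^ 2 * ∫ x in S, ζ x ^ 2 := by
      rw [hG]
      rw [integral_sub hint2 (hint3.const_mul (c ^ 2))]
      rw [MeasureTheory.integral_const_mul]
    linarith [hGnonneg, hsplit.symm.le, hsplit.le]
  -- limit argument
  have hA : 0 ≤ ∫ x in S, ζ x ^ 2 := setIntegral_nonneg hSm (fun x _ => sq_nonneg _)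
  have hfinal : π ^ 2 / (4 * L ^ 2) * ∫ x in S, ζ x ^ 2
      ≤ ∫ x in S, (fderiv ℝ ζ x v) ^ 2 := by
    set A := ∫ x in S, ζ x ^ 2
    set B := ∫ x in S, (fderiv ℝ ζ x v) ^ 2
    have hx0 : (0:ℝ) < π / (2 * L) := by positivity
    have htend : Filter.Tendsto (fun c : ℝ => c ^ 2 * A) (nhdsWithin (π / (2*L)) (Set.Iio (π / (2*L))))
        (nhds ((π / (2*L)) ^ 2 * A)) :=
      ((continuous_pow 2).mul continuous_const).continuousAt.continuousWithinAt.tendsto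
    have heq : (π / (2*L)) ^ 2 * A = π ^ 2 / (4 * L ^ 2) * A := by
      rw [div_pow]; ring_nf
    rw [← heq]
    refine le_of_tendsto htend ?_
    filter_upwards [Ioo_mem_nhdsLT_of_mem (Set.mem_Ioc.mpr ⟨hx0, le_refl _⟩)] with c hc
    refine main c hc.1 ?_
    have h2 := mul_lt_mul_of_pos_right hc.2 hL
    have h3 : π / (2 * L) * L = π / 2 := by field_simp
    linarith
  linarith
end
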